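/- Suppose g satisfies hypothesis (G) with h = b/K. For ψ in M = C¹([-h,0],I) let y(ψ) ∈ C¹([0,h],ℝ) be the unique solution with values in cl(B(x₂,b)) of y(t) + ∫_0^t g(y(s),ψ(−s)) ds = x₂. Then the map ψ ↦ y(ψ) from M to C¹([0,h],ℝ) is continuously Fréchet differentiable, and its derivative is given by Dy(ψ)χ(t) = −∫_0^t e^{−∫_s^t ∂₁g(y(σ,ψ),ψ(−σ)) dσ} ∂₂g(y(s,ψ),ψ(−s)) χ(−s) ds for χ ∈ C¹([-h,0],ℝ). -/

import Mathlib

/-!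
Write `y = Y ψ`, `u t = ψ (-t)`, `h = b / K`. Differentiating the integral equation gives
`y' = -g (y, u)`, and `DY g Y ψ χ` is the variation-of-constants solution of the linearised
equation `D' = -(∂₁g · D + ∂₂g · χ(-·))`, `D 0 = 0`. Every estimate then comes from one a priori
bound: if `F 0 = 0` and `|F'| ≤ λ |F| + ρ` on `[0, h]` then `‖F‖∞ ≤ h ρ / (1 - λ h)`. Here
`λ h < 1`, since the strict bound `|∂₁g| < K / b` survives taking the maximum over a compact
neighbourhood `closedBall x₂ b ×ˢ U` of the trajectory of `ψ`. Applied to `Y ψ' - Y ψ` it gives Lipschitz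
dependence on `ψ`; applied to `Y ψ' - Y ψ - DY g Y ψ (ψ' - ψ)`, whose derivative is
`-(∂₁g · F + R)` with `R` a Taylor remainder made small by the uniform continuity of `Dg` on that
compact set, it gives differentiability; applied to `DY g Y ψ' χ - DY g Y ψ χ` it gives
continuity of the derivative.
-/

open Set

noncomputable def supN {X : Type*} [NormedAddCommGroup X] (a b : ℝ) (f : ℝ → X) : ℝ :=
  ⨆ t : Set.Icc a b, ‖f t.1‖

def C1on {X : Type*} [NormedAddCommGroup X] [NormedSpace ℝ X] (a b : ℝ) (f : ℝ → X) : Prop :=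
  ContinuousOn f (Set.Icc a b) ∧ (∀ t ∈ Set.Icc a b, DifferentiableWithinAt ℝ f (Set.Icc a b) t) ∧
    ContinuousOn (derivWithin f (Set.Icc a b)) (Set.Icc a b)

noncomputable def nC1 {X : Type*} [NormedAddCommGroup X] [NormedSpace ℝ X] (a b : ℝ) (f : ℝ → X) : ℝ :=
  supN a b f + supN a b (derivWithin f (Set.Icc a b))

noncomputable def p1 (k : ℝ → ℝ → ℝ) (x y : ℝ) : ℝ := deriv (fun x' => k x' y) x

noncomputable def p2 (k : ℝ → ℝ → ℝ) (x y : ℝ) : ℝ := deriv (fun y' => k x y') y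

open MeasureTheory Function

section SupNorm

variable {X : Type*} [NormedAddCommGroup X] {a b : ℝ} {f : ℝ → X}

lemma supN_nonneg : 0 ≤ supN a b f :=
  Real.iSup_nonneg fun _ => norm_nonneg _

lemma supN_le {C : ℝ} (hC : 0 ≤ C) (h : ∀ t ∈ Icc a b, ‖f t‖ ≤ C) : supN a b f ≤ C :=
  Real.iSup_le (fun t => h t t.2) hC

lemma norm_le_supN (hf : ContinuousOn f (Icc a b)) {t : ℝ} (ht : t ∈ Icc a b) :
    ‖f t‖ ≤ supN a b f := by
  refine le_ciSup (f := fun s : Icc a b => ‖f s‖)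
    ((isCompact_Icc.image_of_continuousOn hf.norm).bddAbove.mono ?_) ⟨t, ht⟩
  rintro _ ⟨s, rfl⟩
  exact mem_image_of_mem _ s.2

lemma supN_le_nC1 [NormedSpace ℝ X] : supN a b f ≤ nC1 a b f :=
  le_add_of_nonneg_right supN_nonneg

end SupNorm

lemma neg_mem_Icc_neg {h t : ℝ} (ht : t ∈ Icc 0 h) : -t ∈ Icc (-h) 0 :=
  ⟨neg_le_neg ht.2, neg_nonpos.2 ht.1⟩

lemma abs_le_supN_comp_neg {f : ℝ → ℝ} {h t : ℝ} (hf : ContinuousOn f (Icc (-h) 0))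
    (ht : t ∈ Icc 0 h) : |f (-t)| ≤ supN (-h) 0 f :=
  norm_le_supN hf (neg_mem_Icc_neg ht)

lemma ContinuousOn.comp_neg_Icc {f : ℝ → ℝ} {h : ℝ} (hf : ContinuousOn f (Icc (-h) 0)) :
    ContinuousOn (fun t => f (-t)) (Icc 0 h) :=
  hf.comp continuous_neg.continuousOn fun _ => neg_mem_Icc_neg

section LinearGrowth

variable {F F' : ℝ → ℝ} {h lam ρ : ℝ}

lemma nonneg_of_abs_deriv_le (hh : 0 ≤ h) (hF0 : F 0 = 0)
    (hF' : ∀ t ∈ Icc 0 h, |F' t| ≤ lam * |F t| + ρ) : 0 ≤ ρ := by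
  simpa [hF0] using (abs_nonneg _).trans (hF' 0 ⟨le_rfl, hh⟩)

/-- Since `lam * h < 1`, the growth bound closes on the sup norm itself. -/
lemma supN_le_of_abs_deriv_le (hh : 0 ≤ h) (hlam : 0 ≤ lam) (hκ : lam * h < 1)
    (hF : ∀ t ∈ Icc 0 h, HasDerivWithinAt F (F' t) (Icc 0 h) t) (hF0 : F 0 = 0)
    (hF' : ∀ t ∈ Icc 0 h, |F' t| ≤ lam * |F t| + ρ) :
    supN 0 h F ≤ h * ρ / (1 - lam * h) := by
  have hc : ContinuousOn F (Icc 0 h) := fun t ht => (hF t ht).continuousWithinAt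
  have hρ := nonneg_of_abs_deriv_le hh hF0 hF'
  set M := supN 0 h F
  have hM0 : 0 ≤ M := supN_nonneg
  have hM : M ≤ lam * h * M + h * ρ := by
    refine supN_le (by positivity) fun t ht => ?_
    have hsub : Icc 0 t ⊆ Icc 0 h := Icc_subset_Icc le_rfl ht.2
    have hF'M : ∀ x ∈ Ico 0 t, ‖F' x‖ ≤ lam * M + ρ := fun x hx =>
      have hx' := hsub (Ico_subset_Icc_self hx)
      (hF' x hx').trans (by gcongr; exact norm_le_supN hc hx')
    have := norm_image_sub_le_of_norm_deriv_le_segment'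
      (fun x hx => (hF x (hsub hx)).mono hsub) hF'M t (right_mem_Icc.2 ht.1)
    rw [hF0, sub_zero, sub_zero] at this
    calc ‖F t‖ ≤ (lam * M + ρ) * t := this
      _ ≤ (lam * M + ρ) * h := by gcongr; exact ht.2
      _ = lam * h * M + h * ρ := by ring
  rw [le_div_iff₀ (by linarith)]
  linarith

lemma nC1_le_of_abs_deriv_le (hh : 0 < h) (hlam : 0 ≤ lam) (hκ : lam * h < 1)
    (hF : ∀ t ∈ Icc 0 h, HasDerivWithinAt F (F' t) (Icc 0 h) t) (hF0 : F 0 = 0)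
    (hF' : ∀ t ∈ Icc 0 h, |F' t| ≤ lam * |F t| + ρ) :
    nC1 0 h F ≤ ((1 + lam) * h / (1 - lam * h) + 1) * ρ := by
  have hc : ContinuousOn F (Icc 0 h) := fun t ht => (hF t ht).continuousWithinAt
  have hρ := nonneg_of_abs_deriv_le hh.le hF0 hF'
  have hderiv : supN 0 h (derivWithin F (Icc 0 h)) ≤ lam * supN 0 h F + ρ := by
    have hM0 : 0 ≤ supN 0 h F := supN_nonneg
    refine supN_le (by positivity) fun t ht => ?_
    rw [(hF t ht).derivWithin (uniqueDiffOn_Icc hh t ht)]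
    exact (hF' t ht).trans (by gcongr; exact norm_le_supN hc ht)
  calc nC1 0 h F ≤ (1 + lam) * supN 0 h F + ρ := by unfold nC1; linarith
    _ ≤ (1 + lam) * (h * ρ / (1 - lam * h)) + ρ := by
        gcongr; exact supN_le_of_abs_deriv_le hh.le hlam hκ hF hF0 hF'
    _ = ((1 + lam) * h / (1 - lam * h) + 1) * ρ := by ring

end LinearGrowth

section Duhamel

variable {A A' f f' : ℝ → ℝ} {h t lam ρ : ℝ}

lemma ContinuousOn.intervalIntegrable_of_mem_Icc (hA : ContinuousOn A (Icc 0 h))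
    (ht : t ∈ Icc 0 h) : IntervalIntegrable A volume 0 t :=
  (hA.mono (by rw [uIcc_of_le ht.1]; exact Icc_subset_Icc le_rfl ht.2)).intervalIntegrable

lemma ContinuousOn.hasDerivWithinAt_integral (hA : ContinuousOn A (Icc 0 h))
    (ht : t ∈ Icc 0 h) :
    HasDerivWithinAt (fun u => ∫ s in (0:ℝ)..u, A s) (A t) (Icc 0 h) t :=
  have : Fact (t ∈ Icc (0:ℝ) h) := ⟨ht⟩
  intervalIntegral.integral_hasDerivWithinAt_right (hA.intervalIntegrable_of_mem_Icc ht)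
    (hA.stronglyMeasurableAtFilter_nhdsWithin measurableSet_Icc t) (hA.continuousWithinAt ht)

/-- Variation of constants: the solution of `x' = -(A x + f)`, `x 0 = 0`. -/
noncomputable def duhamel (A f : ℝ → ℝ) (t : ℝ) : ℝ :=
  -∫ s in (0:ℝ)..t, Real.exp (-∫ σ in s..t, A σ) * f s

lemma duhamel_zero : duhamel A f 0 = 0 := by simp [duhamel]

lemma duhamel_eq (hA : ContinuousOn A (Icc 0 h)) (ht : t ∈ Icc 0 h) :
    duhamel A f t = -(Real.exp (-∫ σ in (0:ℝ)..t, A σ) *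
      ∫ s in (0:ℝ)..t, Real.exp (∫ σ in (0:ℝ)..s, A σ) * f s) := by
  rw [duhamel, ← intervalIntegral.integral_const_mul]
  congr 1
  refine intervalIntegral.integral_congr fun s hs => ?_
  rw [uIcc_of_le ht.1] at hs
  have hs' : s ∈ Icc 0 h := ⟨hs.1, hs.2.trans ht.2⟩
  rw [← intervalIntegral.integral_interval_sub_left (hA.intervalIntegrable_of_mem_Icc ht)
    (hA.intervalIntegrable_of_mem_Icc hs'), neg_sub, sub_eq_neg_add, Real.exp_add]
  ring

lemma hasDerivWithinAt_duhamel (hA : ContinuousOn A (Icc 0 h)) (hf : ContinuousOn f (Icc 0 h))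
    (ht : t ∈ Icc 0 h) :
    HasDerivWithinAt (duhamel A f) (-(A t * duhamel A f t + f t)) (Icc 0 h) t := by
  set B := fun u => ∫ σ in (0:ℝ)..u, A σ
  have hB : ∀ u ∈ Icc 0 h, HasDerivWithinAt B (A u) (Icc 0 h) u :=
    fun u hu => hA.hasDerivWithinAt_integral hu
  have hBc : ContinuousOn B (Icc 0 h) := fun u hu => (hB u hu).continuousWithinAt
  have hV := ((Real.continuous_exp.comp_continuousOn hBc).mul hf).hasDerivWithinAt_integral ht
  have hW := (((hB t ht).neg.exp).mul hV).neg
  refine (hW.congr (fun u hu => duhamel_eq hA hu) (duhamel_eq hA ht)).congr_deriv ?_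
  rw [duhamel_eq hA ht]
  simp only [Pi.neg_apply, Pi.mul_apply, comp_apply, B, Real.exp_neg]
  field_simp

lemma abs_duhamel_le (hh : 0 ≤ h) (hlam : 0 ≤ lam) (hκ : lam * h < 1)
    (hA : ContinuousOn A (Icc 0 h)) (hf : ContinuousOn f (Icc 0 h))
    (hAb : ∀ t ∈ Icc 0 h, |A t| ≤ lam) (hfb : ∀ t ∈ Icc 0 h, |f t| ≤ ρ) (ht : t ∈ Icc 0 h) :
    |duhamel A f t| ≤ h * ρ / (1 - lam * h) := by
  have hD := fun t ht => hasDerivWithinAt_duhamel (f := f) hA hf (t := t) ht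
  refine (norm_le_supN (fun t ht => (hD t ht).continuousWithinAt) ht).trans
    (supN_le_of_abs_deriv_le hh hlam hκ hD duhamel_zero fun t ht => ?_)
  rw [abs_neg]
  calc |A t * duhamel A f t + f t| ≤ |A t| * |duhamel A f t| + |f t| := by
        rw [← abs_mul]; exact abs_add_le _ _
    _ ≤ lam * |duhamel A f t| + ρ := by gcongr; exacts [hAb t ht, hfb t ht]

lemma nC1_duhamel_sub_duhamel_le {η θ : ℝ} (hh : 0 < h) (hlam : 0 ≤ lam) (hκ : lam * h < 1)
    (hA : ContinuousOn A (Icc 0 h)) (hA' : ContinuousOn A' (Icc 0 h))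
    (hf : ContinuousOn f (Icc 0 h)) (hf' : ContinuousOn f' (Icc 0 h))
    (hAb : ∀ t ∈ Icc 0 h, |A t| ≤ lam) (hA'b : ∀ t ∈ Icc 0 h, |A' t| ≤ lam)
    (hfb : ∀ t ∈ Icc 0 h, |f t| ≤ ρ) (hη : 0 ≤ η)
    (hAA' : ∀ t ∈ Icc 0 h, |A' t - A t| ≤ η) (hff' : ∀ t ∈ Icc 0 h, |f' t - f t| ≤ θ) :
    nC1 0 h (duhamel A' f' - duhamel A f) ≤
      ((1 + lam) * h / (1 - lam * h) + 1) * (η * (h * ρ / (1 - lam * h)) + θ) := by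
  refine nC1_le_of_abs_deriv_le hh hlam hκ
    (fun t ht => (hasDerivWithinAt_duhamel hA' hf' ht).sub (hasDerivWithinAt_duhamel hA hf ht))
    (by simp [duhamel_zero]) fun t ht => ?_
  set D := duhamel A f t
  set D' := duhamel A' f' t
  have hsplit : -(A' t * D' + f' t) - -(A t * D + f t) =
      -(A' t * (D' - D) + ((A' t - A t) * D + (f' t - f t))) := by ring
  rw [hsplit, abs_neg, Pi.sub_apply]
  calc |A' t * (D' - D) + ((A' t - A t) * D + (f' t - f t))|
      ≤ |A' t| * |D' - D| + (|A' t - A t| * |D| + |f' t - f t|) := by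
        simp only [← abs_mul]; exact (abs_add_le _ _).trans (add_le_add le_rfl (abs_add_le _ _))
    _ ≤ lam * |D' - D| + (η * (h * ρ / (1 - lam * h)) + θ) := by
        gcongr
        exacts [hA'b t ht, hAA' t ht, abs_duhamel_le hh.le hlam hκ hA hf hAb hfb ht, hff' t ht]

end Duhamel

lemma Convex.norm_image_sub_sub_fderiv_le {E F : Type*} [NormedAddCommGroup E] [NormedSpace ℝ E]
    [NormedAddCommGroup F] [NormedSpace ℝ F] {f : E → F} {s : Set E} (hs : Convex ℝ s)
    (hf : ∀ z ∈ s, DifferentiableAt ℝ f z) {d η : ℝ}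
    (hmod : ∀ z ∈ s, ∀ w ∈ s, dist z w ≤ d → ‖fderiv ℝ f z - fderiv ℝ f w‖ ≤ η)
    {p q : E} (hp : p ∈ s) (hq : q ∈ s) (hpq : dist q p ≤ d) :
    ‖f q - f p - fderiv ℝ f p (q - p)‖ ≤ η * ‖q - p‖ :=
  (hs.inter (convex_closedBall p d)).norm_image_sub_le_of_norm_fderiv_le'
    (fun z hz => hf z hz.1) (fun z hz => hmod z hz.1 p hp hz.2)
    ⟨hp, Metric.mem_closedBall_self (dist_nonneg.trans hpq)⟩ ⟨hq, hpq⟩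

section PartialDerivatives

variable {g : ℝ → ℝ → ℝ} {p : ℝ × ℝ}

lemma hasDerivAt_p1 {x y : ℝ} (hg : DifferentiableAt ℝ (uncurry g) (x, y)) :
    HasDerivAt (fun x' => g x' y) (p1 g x y) x :=
  have hline : DifferentiableAt ℝ (fun x' => (x', y)) x :=
    differentiableAt_id.prodMk (differentiableAt_const y)
  have h := DifferentiableAt.comp (g := uncurry g) x hg hline
  h.hasDerivAt

lemma hasDerivAt_p2 {x y : ℝ} (hg : DifferentiableAt ℝ (uncurry g) (x, y)) :
    HasDerivAt (fun y' => g x y') (p2 g x y) y :=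
  have hline : DifferentiableAt ℝ (fun y' => (x, y')) y :=
    (differentiableAt_const x).prodMk differentiableAt_id
  have h := DifferentiableAt.comp (g := uncurry g) y hg hline
  h.hasDerivAt

lemma p1_eq_fderiv (hg : DifferentiableAt ℝ (uncurry g) p) :
    p1 g p.1 p.2 = fderiv ℝ (uncurry g) p (1, 0) :=
  have hline : HasDerivAt (fun x' => (x', p.2)) ((1 : ℝ), (0 : ℝ)) p.1 :=
    (hasDerivAt_id p.1).prodMk (hasDerivAt_const p.1 p.2)
  have h := HasFDerivAt.comp_hasDerivAt (l := uncurry g) p.1 hg.hasFDerivAt hline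
  h.deriv

lemma p2_eq_fderiv (hg : DifferentiableAt ℝ (uncurry g) p) :
    p2 g p.1 p.2 = fderiv ℝ (uncurry g) p (0, 1) :=
  have hline : HasDerivAt (fun y' => (p.1, y')) ((0 : ℝ), (1 : ℝ)) p.2 :=
    (hasDerivAt_const p.2 p.1).prodMk (hasDerivAt_id p.2)
  have h := HasFDerivAt.comp_hasDerivAt (l := uncurry g) p.2 hg.hasFDerivAt hline
  h.deriv

lemma fderiv_uncurry_apply (hg : DifferentiableAt ℝ (uncurry g) p) (v : ℝ × ℝ) :
    fderiv ℝ (uncurry g) p v = p1 g p.1 p.2 * v.1 + p2 g p.1 p.2 * v.2 := by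
  have hv : v = v.1 • ((1 : ℝ), (0 : ℝ)) + v.2 • ((0 : ℝ), (1 : ℝ)) := by ext <;> simp
  rw [p1_eq_fderiv hg, p2_eq_fderiv hg]
  conv_lhs => rw [hv]
  rw [map_add, map_smul, map_smul, smul_eq_mul, smul_eq_mul, mul_comm, mul_comm v.2]

lemma abs_p1_sub_p1_le {q : ℝ × ℝ} (hp : DifferentiableAt ℝ (uncurry g) p)
    (hq : DifferentiableAt ℝ (uncurry g) q) :
    |p1 g q.1 q.2 - p1 g p.1 p.2| ≤ ‖fderiv ℝ (uncurry g) q - fderiv ℝ (uncurry g) p‖ := by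
  rw [p1_eq_fderiv hp, p1_eq_fderiv hq]
  simpa using (fderiv ℝ (uncurry g) q - fderiv ℝ (uncurry g) p).le_opNorm ((1 : ℝ), (0 : ℝ))

lemma abs_p2_sub_p2_le {q : ℝ × ℝ} (hp : DifferentiableAt ℝ (uncurry g) p)
    (hq : DifferentiableAt ℝ (uncurry g) q) :
    |p2 g q.1 q.2 - p2 g p.1 p.2| ≤ ‖fderiv ℝ (uncurry g) q - fderiv ℝ (uncurry g) p‖ := by
  rw [p2_eq_fderiv hp, p2_eq_fderiv hq]
  simpa using (fderiv ℝ (uncurry g) q - fderiv ℝ (uncurry g) p).le_opNorm ((0 : ℝ), (1 : ℝ))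

lemma continuousOn_p1_of_fderiv {S : Set (ℝ × ℝ)}
    (hd : ∀ p ∈ S, DifferentiableAt ℝ (uncurry g) p) (hc : ContinuousOn (fderiv ℝ (uncurry g)) S) :
    ContinuousOn (fun p : ℝ × ℝ => p1 g p.1 p.2) S :=
  (hc.clm_apply continuousOn_const).congr fun p hp => p1_eq_fderiv (hd p hp)

lemma continuousOn_p2_of_fderiv {S : Set (ℝ × ℝ)}
    (hd : ∀ p ∈ S, DifferentiableAt ℝ (uncurry g) p) (hc : ContinuousOn (fderiv ℝ (uncurry g)) S) :
    ContinuousOn (fun p : ℝ × ℝ => p2 g p.1 p.2) S :=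
  (hc.clm_apply continuousOn_const).congr fun p hp => p2_eq_fderiv (hd p hp)

end PartialDerivatives

structure C1BoundsOn (g : ℝ → ℝ → ℝ) (B U : Set ℝ) (lam L : ℝ) : Prop where
  convex_fst : Convex ℝ B
  convex_snd : Convex ℝ U
  differentiableAt : ∀ p ∈ B ×ˢ U, DifferentiableAt ℝ (uncurry g) p
  continuousOn_fderiv : ContinuousOn (fderiv ℝ (uncurry g)) (B ×ˢ U)
  abs_p1_le : ∀ p ∈ B ×ˢ U, |p1 g p.1 p.2| ≤ lam
  abs_p2_le : ∀ p ∈ B ×ˢ U, |p2 g p.1 p.2| ≤ L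

namespace C1BoundsOn

variable {g : ℝ → ℝ → ℝ} {B U : Set ℝ} {lam L d η : ℝ}

lemma nonneg_p2_bound (hg : C1BoundsOn g B U lam L) {p : ℝ × ℝ} (hp : p ∈ B ×ˢ U) : 0 ≤ L :=
  (abs_nonneg _).trans (hg.abs_p2_le p hp)

lemma continuousOn (hg : C1BoundsOn g B U lam L) : ContinuousOn (uncurry g) (B ×ˢ U) :=
  fun p hp => (hg.differentiableAt p hp).continuousAt.continuousWithinAt

lemma continuousOn_p1 (hg : C1BoundsOn g B U lam L) :
    ContinuousOn (fun p : ℝ × ℝ => p1 g p.1 p.2) (B ×ˢ U) :=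
  continuousOn_p1_of_fderiv hg.differentiableAt hg.continuousOn_fderiv

lemma continuousOn_p2 (hg : C1BoundsOn g B U lam L) :
    ContinuousOn (fun p : ℝ × ℝ => p2 g p.1 p.2) (B ×ˢ U) :=
  continuousOn_p2_of_fderiv hg.differentiableAt hg.continuousOn_fderiv

lemma exists_modulus (hg : C1BoundsOn g B U lam L) (hB : IsCompact B) (hU : IsCompact U)
    (hη : 0 < η) : ∃ d > 0, ∀ p ∈ B ×ˢ U, ∀ q ∈ B ×ˢ U, dist p q ≤ d →
      ‖fderiv ℝ (uncurry g) p - fderiv ℝ (uncurry g) q‖ ≤ η := by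
  have := (hB.prod hU).uniformContinuousOn_of_continuous hg.continuousOn_fderiv
  simpa only [dist_eq_norm] using Metric.uniformContinuousOn_iff_le.1 this η hη

lemma abs_sub_le (hg : C1BoundsOn g B U lam L) {x x' u u' : ℝ} (hx : x ∈ B) (hx' : x' ∈ B)
    (hu : u ∈ U) (hu' : u' ∈ U) : |g x' u' - g x u| ≤ lam * |x' - x| + L * |u' - u| := by
  have h₁ : |g x' u' - g x u'| ≤ lam * |x' - x| :=
    hg.convex_fst.norm_image_sub_le_of_norm_hasDerivWithin_le
      (fun z hz => (hasDerivAt_p1 (hg.differentiableAt (z, u') ⟨hz, hu'⟩)).hasDerivWithinAt)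
      (fun z hz => hg.abs_p1_le (z, u') ⟨hz, hu'⟩) hx hx'
  have h₂ : |g x u' - g x u| ≤ L * |u' - u| :=
    hg.convex_snd.norm_image_sub_le_of_norm_hasDerivWithin_le
      (fun z hz => (hasDerivAt_p2 (hg.differentiableAt (x, z) ⟨hx, hz⟩)).hasDerivWithinAt)
      (fun z hz => hg.abs_p2_le (x, z) ⟨hx, hz⟩) hu hu'
  calc |g x' u' - g x u| = |(g x' u' - g x u') + (g x u' - g x u)| := by ring_nf
    _ ≤ lam * |x' - x| + L * |u' - u| := (abs_add_le _ _).trans (add_le_add h₁ h₂)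

lemma abs_taylor_le (hg : C1BoundsOn g B U lam L)
    (hmod : ∀ p ∈ B ×ˢ U, ∀ q ∈ B ×ˢ U, dist p q ≤ d →
      ‖fderiv ℝ (uncurry g) p - fderiv ℝ (uncurry g) q‖ ≤ η)
    {p q : ℝ × ℝ} (hp : p ∈ B ×ˢ U) (hq : q ∈ B ×ˢ U) (hpq : dist q p ≤ d) :
    |g q.1 q.2 - g p.1 p.2 - p1 g p.1 p.2 * (q.1 - p.1) - p2 g p.1 p.2 * (q.2 - p.2)|
      ≤ η * dist q p := by
  have := (hg.convex_fst.prod hg.convex_snd).norm_image_sub_sub_fderiv_le hg.differentiableAt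
    hmod hp hq hpq
  rw [fderiv_uncurry_apply (hg.differentiableAt p hp), ← dist_eq_norm q p] at this
  simpa only [uncurry, Prod.fst_sub, Prod.snd_sub, Real.norm_eq_abs, sub_sub, add_assoc] using this

end C1BoundsOn

/-- The differentiated form of `y t + ∫₀ᵗ g (y s) (u s) ds = const`; below `u t = ψ (-t)`. -/
structure SolvesOn (g : ℝ → ℝ → ℝ) (B U : Set ℝ) (h : ℝ) (y u : ℝ → ℝ) : Prop where
  continuousOn_snd : ContinuousOn u (Icc 0 h)
  mapsTo_fst : MapsTo y (Icc 0 h) B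
  mapsTo_snd : MapsTo u (Icc 0 h) U
  hasDerivWithinAt : ∀ t ∈ Icc 0 h, HasDerivWithinAt y (-g (y t) (u t)) (Icc 0 h) t

lemma solvesOn_of_integral_eq {g : ℝ → ℝ → ℝ} {B U : Set ℝ} {h x₀ : ℝ} {y u : ℝ → ℝ}
    (hg : ContinuousOn (uncurry g) (B ×ˢ U)) (hy : ContinuousOn y (Icc 0 h))
    (hu : ContinuousOn u (Icc 0 h)) (hyB : MapsTo y (Icc 0 h) B) (huU : MapsTo u (Icc 0 h) U)
    (heq : ∀ t ∈ Icc 0 h, y t + ∫ s in (0:ℝ)..t, g (y s) (u s) = x₀) :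
    SolvesOn g B U h y u where
  continuousOn_snd := hu
  mapsTo_fst := hyB
  mapsTo_snd := huU
  hasDerivWithinAt t ht := by
    have hint : ContinuousOn (fun s => g (y s) (u s)) (Icc 0 h) :=
      hg.comp (hy.prodMk hu) fun s hs => ⟨hyB hs, huU hs⟩
    exact ((hint.hasDerivWithinAt_integral ht).const_sub x₀).congr
      (fun s hs => eq_sub_of_add_eq (heq s hs)) (eq_sub_of_add_eq (heq t ht))

namespace SolvesOn

variable {g : ℝ → ℝ → ℝ} {B U : Set ℝ} {h lam L d η : ℝ} {y u y' u' : ℝ → ℝ}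

lemma mem_prod (hy : SolvesOn g B U h y u) {t : ℝ} (ht : t ∈ Icc 0 h) : (y t, u t) ∈ B ×ˢ U :=
  ⟨hy.mapsTo_fst ht, hy.mapsTo_snd ht⟩

lemma continuousOn_fst (hy : SolvesOn g B U h y u) : ContinuousOn y (Icc 0 h) :=
  fun t ht => (hy.hasDerivWithinAt t ht).continuousWithinAt

lemma continuousOn_comp (hy : SolvesOn g B U h y u) {Φ : ℝ × ℝ → ℝ}
    (hΦ : ContinuousOn Φ (B ×ˢ U)) : ContinuousOn (fun t => Φ (y t, u t)) (Icc 0 h) :=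
  hΦ.comp (hy.continuousOn_fst.prodMk hy.continuousOn_snd) fun _ => hy.mem_prod

lemma abs_sub_le (hg : C1BoundsOn g B U lam L) (hh : 0 ≤ h) (hlam : 0 ≤ lam)
    (hκ : lam * h < 1) (hy : SolvesOn g B U h y u) (hy' : SolvesOn g B U h y' u')
    (h0 : y' 0 = y 0) {δ : ℝ} (hu : ∀ t ∈ Icc 0 h, |u' t - u t| ≤ δ) {t : ℝ}
    (ht : t ∈ Icc 0 h) : |y' t - y t| ≤ h * (L * δ) / (1 - lam * h) := by
  have hF : ∀ t ∈ Icc 0 h, HasDerivWithinAt (y' - y) (-g (y' t) (u' t) - -g (y t) (u t))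
      (Icc 0 h) t := fun t ht => (hy'.hasDerivWithinAt t ht).sub (hy.hasDerivWithinAt t ht)
  refine (norm_le_supN (fun t ht => (hF t ht).continuousWithinAt) ht).trans
    (supN_le_of_abs_deriv_le hh hlam hκ hF (by simp [h0]) fun t ht => ?_)
  have hL := hg.nonneg_p2_bound (hy.mem_prod ht)
  rw [neg_sub_neg, abs_sub_comm, Pi.sub_apply]
  calc |g (y' t) (u' t) - g (y t) (u t)| ≤ lam * |y' t - y t| + L * |u' t - u t| :=
        hg.abs_sub_le (hy.mapsTo_fst ht) (hy'.mapsTo_fst ht) (hy.mapsTo_snd ht)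
          (hy'.mapsTo_snd ht)
    _ ≤ lam * |y' t - y t| + L * δ := by gcongr; exact hu t ht

lemma dist_le (hg : C1BoundsOn g B U lam L) (hh : 0 ≤ h) (hlam : 0 ≤ lam)
    (hκ : lam * h < 1) (hy : SolvesOn g B U h y u) (hy' : SolvesOn g B U h y' u')
    (h0 : y' 0 = y 0) {δ : ℝ} (hu : ∀ t ∈ Icc 0 h, |u' t - u t| ≤ δ) {t : ℝ}
    (ht : t ∈ Icc 0 h) : dist (y' t, u' t) (y t, u t) ≤ (h * L / (1 - lam * h) + 1) * δ := by
  have hδ : 0 ≤ δ := (abs_nonneg _).trans (hu t ht)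
  have hCy : 0 ≤ h * L / (1 - lam * h) :=
    div_nonneg (mul_nonneg hh (hg.nonneg_p2_bound (hy.mem_prod ht))) (by linarith)
  have hstab : |y' t - y t| ≤ h * L / (1 - lam * h) * δ :=
    (hy.abs_sub_le hg hh hlam hκ hy' h0 hu ht).trans_eq (by ring)
  rw [Prod.dist_eq, Real.dist_eq, Real.dist_eq]
  exact max_le (hstab.trans (by nlinarith)) ((hu t ht).trans (by nlinarith))

lemma nC1_sub_sub_duhamel_le (hg : C1BoundsOn g B U lam L) (hh : 0 < h) (hlam : 0 ≤ lam)
    (hκ : lam * h < 1) (hy : SolvesOn g B U h y u) (hy' : SolvesOn g B U h y' u')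
    (h0 : y' 0 = y 0) (hη : 0 ≤ η)
    (hmod : ∀ p ∈ B ×ˢ U, ∀ q ∈ B ×ˢ U, dist p q ≤ d →
      ‖fderiv ℝ (uncurry g) p - fderiv ℝ (uncurry g) q‖ ≤ η)
    {r : ℝ} (hrd : r ≤ d) (hclose : ∀ t ∈ Icc 0 h, dist (y' t, u' t) (y t, u t) ≤ r) :
    nC1 0 h (y' - y - duhamel (fun t => p1 g (y t) (u t))
      (fun t => p2 g (y t) (u t) * (u' t - u t))) ≤
      ((1 + lam) * h / (1 - lam * h) + 1) * (η * r) := by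
  set A := fun t => p1 g (y t) (u t)
  set C := fun t => p2 g (y t) (u t)
  set D := duhamel A fun t => C t * (u' t - u t)
  have hA : ContinuousOn A (Icc 0 h) := hy.continuousOn_comp hg.continuousOn_p1
  have hf : ContinuousOn (fun t => C t * (u' t - u t)) (Icc 0 h) :=
    (hy.continuousOn_comp hg.continuousOn_p2).mul (hy'.continuousOn_snd.sub hy.continuousOn_snd)
  set R := fun t => g (y' t) (u' t) - g (y t) (u t) - A t * (y' t - y t) - C t * (u' t - u t)
  refine nC1_le_of_abs_deriv_le hh hlam hκ (F' := fun t => -(A t * (y' t - y t - D t) + R t))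
    (fun t ht => ?_) (by simp [h0, D, duhamel_zero]) fun t ht => ?_
  · exact (((hy'.hasDerivWithinAt t ht).sub (hy.hasDerivWithinAt t ht)).sub
      (hasDerivWithinAt_duhamel hA hf ht)).congr_deriv (by ring)
  · have hR : |R t| ≤ η * r := (hg.abs_taylor_le hmod (hy.mem_prod ht) (hy'.mem_prod ht)
      ((hclose t ht).trans hrd)).trans (by gcongr; exact hclose t ht)
    rw [abs_neg]
    calc |A t * (y' t - y t - D t) + R t| ≤ |A t| * |y' t - y t - D t| + |R t| := by
          rw [← abs_mul]; exact abs_add_le _ _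
      _ ≤ lam * |y' t - y t - D t| + η * r := by
          gcongr; exact hg.abs_p1_le _ (hy.mem_prod ht)

lemma nC1_duhamel_sub_duhamel_le (hg : C1BoundsOn g B U lam L) (hh : 0 < h) (hlam : 0 ≤ lam)
    (hκ : lam * h < 1) (hy : SolvesOn g B U h y u) (hy' : SolvesOn g B U h y' u') (hη : 0 ≤ η)
    (hmod : ∀ p ∈ B ×ˢ U, ∀ q ∈ B ×ˢ U, dist p q ≤ d →
      ‖fderiv ℝ (uncurry g) p - fderiv ℝ (uncurry g) q‖ ≤ η)
    (hclose : ∀ t ∈ Icc 0 h, dist (y' t, u' t) (y t, u t) ≤ d)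
    {X : ℝ → ℝ} {M : ℝ} (hX : ContinuousOn X (Icc 0 h)) (hXb : ∀ t ∈ Icc 0 h, |X t| ≤ M) :
    nC1 0 h (duhamel (fun t => p1 g (y' t) (u' t)) (fun t => p2 g (y' t) (u' t) * X t) -
      duhamel (fun t => p1 g (y t) (u t)) (fun t => p2 g (y t) (u t) * X t)) ≤
      ((1 + lam) * h / (1 - lam * h) + 1) * (η * (h * (L * M) / (1 - lam * h)) + η * M) := by
  have hmod' : ∀ t ∈ Icc 0 h, ‖fderiv ℝ (uncurry g) (y' t, u' t) -
      fderiv ℝ (uncurry g) (y t, u t)‖ ≤ η :=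
    fun t ht => hmod _ (hy'.mem_prod ht) _ (hy.mem_prod ht) (hclose t ht)
  refine _root_.nC1_duhamel_sub_duhamel_le hh hlam hκ (hy.continuousOn_comp hg.continuousOn_p1)
    (hy'.continuousOn_comp hg.continuousOn_p1) ((hy.continuousOn_comp hg.continuousOn_p2).mul hX)
    ((hy'.continuousOn_comp hg.continuousOn_p2).mul hX)
    (fun t ht => hg.abs_p1_le _ (hy.mem_prod ht)) (fun t ht => hg.abs_p1_le _ (hy'.mem_prod ht))
    (fun t ht => ?_) hη
    (fun t ht => (abs_p1_sub_p1_le (hg.differentiableAt _ (hy.mem_prod ht))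
      (hg.differentiableAt _ (hy'.mem_prod ht))).trans (hmod' t ht)) (fun t ht => ?_)
  · rw [abs_mul]
    exact mul_le_mul (hg.abs_p2_le _ (hy.mem_prod ht)) (hXb t ht) (abs_nonneg _)
      (hg.nonneg_p2_bound (hy.mem_prod ht))
  · rw [← sub_mul, abs_mul]
    exact mul_le_mul ((abs_p2_sub_p2_le (hg.differentiableAt _ (hy.mem_prod ht))
      (hg.differentiableAt _ (hy'.mem_prod ht))).trans (hmod' t ht)) (hXb t ht) (abs_nonneg _) hη

end SolvesOn

/-- The candidate derivative of ψ ↦ y(·,ψ):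
Dy(ψ)χ(t) = -∫₀ᵗ e^{-∫ₛᵗ ∂₁g(y(σ,ψ),ψ(-σ)) dσ} ∂₂g(y(s,ψ),ψ(-s)) χ(-s) ds. -/
noncomputable def DY (g : ℝ → ℝ → ℝ) (Y : (ℝ → ℝ) → ℝ → ℝ) (ψ χ : ℝ → ℝ) : ℝ → ℝ :=
  fun t => -∫ s in (0:ℝ)..t,
    Real.exp (-∫ σ in s..t, p1 g (Y ψ σ) (ψ (-σ))) * (p2 g (Y ψ s) (ψ (-s)) * χ (-s))

lemma exists_convex_isCompact_nhds_image {I : Set ℝ} (hI : IsOpen I) {a c : ℝ} {ψ : ℝ → ℝ}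
    (hψ : ContinuousOn ψ (Icc a c)) (hψI : MapsTo ψ (Icc a c) I) :
    ∃ δ > 0, ∃ U, IsCompact U ∧ Convex ℝ U ∧ U ⊆ I ∧
      ∀ v ∈ Icc a c, ∀ w, |w - ψ v| ≤ δ → w ∈ U := by
  have hK : IsCompact (ψ '' Icc a c) := isCompact_Icc.image_of_continuousOn hψ
  obtain ⟨δ, hδ, hsub⟩ := hK.exists_cthickening_subset_open hI (image_subset_iff.2 hψI)
  refine ⟨δ, hδ, _, hK.cthickening, ?_, hsub, fun v hv w hw => ?_⟩
  · exact (convex_iff_ordConnected.2 (isPreconnected_Icc.image _ hψ).ordConnected).cthickening δ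
  · exact Metric.closedBall_subset_cthickening (mem_image_of_mem ψ hv) δ hw

lemma exists_c1BoundsOn {g : ℝ → ℝ → ℝ} {W : Set (ℝ × ℝ)} (hW : IsOpen W)
    (hg : ContDiffOn ℝ 1 (uncurry g) W) {B U : Set ℝ} (hB : IsCompact B) (hU : IsCompact U)
    (hBc : Convex ℝ B) (hUc : Convex ℝ U) (hsub : B ×ˢ U ⊆ W) (hne : (B ×ˢ U).Nonempty)
    {c : ℝ} (hc : ∀ p ∈ B ×ˢ U, |p1 g p.1 p.2| < c) :
    ∃ lam L, 0 ≤ lam ∧ lam < c ∧ C1BoundsOn g B U lam L := by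
  have hdiff : ∀ p ∈ B ×ˢ U, DifferentiableAt ℝ (uncurry g) p := fun p hp =>
    (hg.contDiffAt (hW.mem_nhds (hsub hp))).differentiableAt one_ne_zero
  have hcont := (hg.continuousOn_fderiv_of_isOpen hW le_rfl).mono hsub
  obtain ⟨pm, hpm, hmax⟩ :=
    (hB.prod hU).exists_isMaxOn hne (continuousOn_p1_of_fderiv hdiff hcont).abs
  obtain ⟨L, hL⟩ :=
    (hB.prod hU).exists_bound_of_continuousOn (continuousOn_p2_of_fderiv hdiff hcont)
  exact ⟨_, L, abs_nonneg _, hc pm hpm, hBc, hUc, hdiff, hcont, fun p hp => hmax hp, hL⟩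

lemma solvesOn_solutionMap {I U : Set ℝ} {x₂ b K : ℝ} {g : ℝ → ℝ → ℝ}
    {Y : (ℝ → ℝ) → ℝ → ℝ}
    (hY : ∀ ψ : ℝ → ℝ, C1on (-(b/K)) 0 ψ → (∀ t ∈ Set.Icc (-(b/K)) 0, ψ t ∈ I) →
      C1on 0 (b/K) (Y ψ) ∧ (∀ s ∈ Set.Icc (0:ℝ) (b/K), Y ψ s ∈ Metric.closedBall x₂ b) ∧
      (∀ t ∈ Set.Icc (0:ℝ) (b/K), Y ψ t + ∫ s in (0:ℝ)..t, g (Y ψ s) (ψ (-s)) = x₂))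
    (hg : ContinuousOn (uncurry g) (Metric.closedBall x₂ b ×ˢ U)) (hbK : 0 ≤ b / K)
    {ψ : ℝ → ℝ} (hψ : C1on (-(b/K)) 0 ψ) (hψI : ∀ t ∈ Icc (-(b/K)) 0, ψ t ∈ I)
    (hψU : ∀ t ∈ Icc (-(b/K)) 0, ψ t ∈ U) :
    SolvesOn g (Metric.closedBall x₂ b) U (b/K) (Y ψ) (fun t => ψ (-t)) ∧ Y ψ 0 = x₂ := by
  obtain ⟨hYc, hYB, hYeq⟩ := hY ψ hψ hψI
  refine ⟨solvesOn_of_integral_eq hg hYc.1 hψ.1.comp_neg_Icc hYB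
    (fun t ht => hψU _ (neg_mem_Icc_neg ht)) hYeq, ?_⟩
  simpa using hYeq 0 ⟨le_rfl, hbK⟩

lemma exists_local_c1BoundsOn {I J : Set ℝ} (hIo : IsOpen I) (hJo : IsOpen J)
    {x₂ b K : ℝ} (hb : 0 < b) (hK : 0 < K) {g : ℝ → ℝ → ℝ}
    (hsub : Metric.closedBall x₂ b ⊆ J)
    (hg : ContDiffOn ℝ 1 (fun p : ℝ × ℝ => g p.1 p.2) (J ×ˢ I))
    (hg2 : ∀ x ∈ Metric.closedBall x₂ b, ∀ y ∈ I, |p1 g x y| < K / b)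
    {ψ : ℝ → ℝ} (hψ : ContinuousOn ψ (Icc (-(b/K)) 0)) (hψI : ∀ t ∈ Icc (-(b/K)) 0, ψ t ∈ I) :
    ∃ δ₀ > 0, ∃ U lam L, IsCompact U ∧ 0 ≤ lam ∧ lam * (b / K) < 1 ∧
      C1BoundsOn g (Metric.closedBall x₂ b) U lam L ∧
      ∀ v ∈ Icc (-(b/K)) 0, ∀ w, |w - ψ v| ≤ δ₀ → w ∈ U := by
  obtain ⟨δ₀, hδ₀, U, hUc, hUconv, hUI, hU⟩ := exists_convex_isCompact_nhds_image hIo hψ hψI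
  have hmem : (x₂, ψ 0) ∈ Metric.closedBall x₂ b ×ˢ U :=
    ⟨Metric.mem_closedBall_self hb.le,
      hU 0 ⟨neg_nonpos.2 (div_pos hb hK).le, le_rfl⟩ _ (by simpa using hδ₀.le)⟩
  obtain ⟨lam, L, hlam, hlamK, hgU⟩ := exists_c1BoundsOn (hJo.prod hIo) hg
    (isCompact_closedBall x₂ b) hUc (convex_closedBall x₂ b) hUconv (prod_mono hsub hUI)
    ⟨_, hmem⟩ fun p hp => hg2 _ hp.1 _ (hUI hp.2)
  refine ⟨δ₀, hδ₀, U, lam, L, hUc, hlam, ?_, hgU, hU⟩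
  calc lam * (b / K) < K / b * (b / K) := by gcongr
    _ = 1 := by field_simp

theorem solutionMap_local_estimates (I J : Set ℝ) (hIo : IsOpen I) (hJo : IsOpen J)
    (x₂ b K : ℝ) (hb : 0 < b) (hK : 0 < K) (g : ℝ → ℝ → ℝ)
    (hsub : Metric.closedBall x₂ b ⊆ J)
    (hg : ContDiffOn ℝ 1 (fun p : ℝ × ℝ => g p.1 p.2) (J ×ˢ I))
    (hg2 : ∀ x ∈ Metric.closedBall x₂ b, ∀ y ∈ I, |p1 g x y| < K / b)
    (Y : (ℝ → ℝ) → ℝ → ℝ)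
    (hY : ∀ ψ : ℝ → ℝ, C1on (-(b/K)) 0 ψ → (∀ t ∈ Set.Icc (-(b/K)) 0, ψ t ∈ I) →
      C1on 0 (b/K) (Y ψ) ∧ (∀ s ∈ Set.Icc (0:ℝ) (b/K), Y ψ s ∈ Metric.closedBall x₂ b) ∧
      (∀ t ∈ Set.Icc (0:ℝ) (b/K), Y ψ t + ∫ s in (0:ℝ)..t, g (Y ψ s) (ψ (-s)) = x₂))
    {ψ : ℝ → ℝ} (hψ : C1on (-(b/K)) 0 ψ) (hψI : ∀ t ∈ Icc (-(b/K)) 0, ψ t ∈ I)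
    {ε' : ℝ} (hε' : 0 < ε') :
    ∃ δ > 0, ∀ ψ' : ℝ → ℝ, C1on (-(b/K)) 0 ψ' → (∀ t ∈ Icc (-(b/K)) 0, ψ' t ∈ I) →
      nC1 (-(b/K)) 0 (ψ' - ψ) ≤ δ →
      nC1 0 (b/K) (Y ψ' - Y ψ - DY g Y ψ (ψ' - ψ)) ≤ ε' * nC1 (-(b/K)) 0 (ψ' - ψ) ∧
      ∀ χ : ℝ → ℝ, C1on (-(b/K)) 0 χ →
        nC1 0 (b/K) (DY g Y ψ' χ - DY g Y ψ χ) ≤ ε' * nC1 (-(b/K)) 0 χ := by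
  obtain ⟨δ₀, hδ₀, U, lam, L, hUc, hlam, hκ, hgU, hU⟩ :=
    exists_local_c1BoundsOn hIo hJo hb hK hsub hg hg2 hψ.1 hψI
  set h := b / K
  have hh : 0 < h := div_pos hb hK
  obtain ⟨hsol, hY0⟩ := solvesOn_solutionMap hY hgU.continuousOn hh.le hψ hψI
    fun t ht => hU t ht _ (by simpa using hδ₀.le)
  have hL : 0 ≤ L := hgU.nonneg_p2_bound (hsol.mem_prod ⟨le_rfl, hh.le⟩)
  set Cy := h * L / (1 - lam * h)
  set K1 := (1 + lam) * h / (1 - lam * h) + 1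
  have hCy : 0 ≤ Cy := div_nonneg (by positivity) (by linarith)
  have hK1 : 1 ≤ K1 := le_add_of_nonneg_left (div_nonneg (by positivity) (by linarith))
  set η := ε' / (K1 * (Cy + 1))
  have hη : 0 < η := div_pos hε' (by positivity)
  have hscale : ∀ m, K1 * (η * ((Cy + 1) * m)) = ε' * m := fun m => by
    simp only [η]; field_simp
  obtain ⟨d, hd, hmod⟩ := hgU.exists_modulus (isCompact_closedBall x₂ b) hUc hη
  refine ⟨min δ₀ (d / (Cy + 1)), by positivity, fun ψ' hψ' hψ'I hδ => ?_⟩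
  set dA := supN (-h) 0 (ψ' - ψ)
  have hdA : dA ≤ min δ₀ (d / (Cy + 1)) := supN_le_nC1.trans hδ
  have hu : ∀ t ∈ Icc 0 h, |ψ' (-t) - ψ (-t)| ≤ dA :=
    fun t ht => abs_le_supN_comp_neg (hψ'.1.sub hψ.1) ht
  obtain ⟨hsol', hY0'⟩ := solvesOn_solutionMap hY hgU.continuousOn hh.le hψ' hψ'I
    fun t ht => hU t ht _ ((norm_le_supN (hψ'.1.sub hψ.1) ht).trans (hdA.trans (min_le_left _ _)))
  have h0 : Y ψ' 0 = Y ψ 0 := hY0'.trans hY0.symm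
  have hrd : (Cy + 1) * dA ≤ d := (le_div_iff₀' (by positivity)).1 (hdA.trans (min_le_right _ _))
  have hclose : ∀ t ∈ Icc 0 h, dist (Y ψ' t, ψ' (-t)) (Y ψ t, ψ (-t)) ≤ (Cy + 1) * dA :=
    fun t ht => hsol.dist_le hgU hh.le hlam hκ hsol' h0 hu ht
  refine ⟨?_, fun χ hχ => ?_⟩
  · calc nC1 0 h (Y ψ' - Y ψ - DY g Y ψ (ψ' - ψ)) ≤ K1 * (η * ((Cy + 1) * dA)) :=
          hsol.nC1_sub_sub_duhamel_le hgU hh hlam hκ hsol' h0 hη.le hmod hrd hclose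
      _ = ε' * dA := hscale dA
      _ ≤ ε' * nC1 (-h) 0 (ψ' - ψ) := by gcongr; exact supN_le_nC1
  · set Mχ := supN (-h) 0 χ
    calc nC1 0 h (DY g Y ψ' χ - DY g Y ψ χ)
        ≤ K1 * (η * (h * (L * Mχ) / (1 - lam * h)) + η * Mχ) :=
          hsol.nC1_duhamel_sub_duhamel_le hgU hh hlam hκ hsol' hη.le hmod
            (fun t ht => (hclose t ht).trans hrd) hχ.1.comp_neg_Icc
            (fun t ht => abs_le_supN_comp_neg hχ.1 ht)
      _ = K1 * (η * ((Cy + 1) * Mχ)) := by simp only [Cy]; ring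
      _ = ε' * Mχ := hscale Mχ
      _ ≤ ε' * nC1 (-h) 0 χ := by gcongr; exact supN_le_nC1

theorem stmt19_general (I J : Set ℝ) (hIo : IsOpen I)
    (hJo : IsOpen J)
    (x₂ b K : ℝ) (hb : 0 < b) (hK : 0 < K)
    (g : ℝ → ℝ → ℝ)
    (hsub : Metric.closedBall x₂ b ⊆ J)
    (hg : ContDiffOn ℝ 1 (fun p : ℝ × ℝ => g p.1 p.2) (J ×ˢ I))
    (hg2 : ∀ x ∈ Metric.closedBall x₂ b, ∀ y ∈ I, |p1 g x y| < K / b)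
    (Y : (ℝ → ℝ) → ℝ → ℝ)
    (hY : ∀ ψ : ℝ → ℝ, C1on (-(b/K)) 0 ψ → (∀ t ∈ Set.Icc (-(b/K)) 0, ψ t ∈ I) →
      C1on 0 (b/K) (Y ψ) ∧ (∀ s ∈ Set.Icc (0:ℝ) (b/K), Y ψ s ∈ Metric.closedBall x₂ b) ∧
      (∀ t ∈ Set.Icc (0:ℝ) (b/K),
        Y ψ t + ∫ s in (0:ℝ)..t, g (Y ψ s) (ψ (-s)) = x₂)) :
    (∀ ψ : ℝ → ℝ, C1on (-(b/K)) 0 ψ → (∀ t ∈ Set.Icc (-(b/K)) 0, ψ t ∈ I) →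
      ∀ ε' > 0, ∃ δ > 0, ∀ ψ' : ℝ → ℝ,
        C1on (-(b/K)) 0 ψ' → (∀ t ∈ Set.Icc (-(b/K)) 0, ψ' t ∈ I) →
        nC1 (-(b/K)) 0 (ψ' - ψ) ≤ δ →
        nC1 0 (b/K) (Y ψ' - Y ψ - DY g Y ψ (ψ' - ψ)) ≤ ε' * nC1 (-(b/K)) 0 (ψ' - ψ)) ∧
    (∀ ψ : ℝ → ℝ, C1on (-(b/K)) 0 ψ → (∀ t ∈ Set.Icc (-(b/K)) 0, ψ t ∈ I) →
      ∀ ε' > 0, ∃ δ > 0, ∀ ψ' : ℝ → ℝ,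
        C1on (-(b/K)) 0 ψ' → (∀ t ∈ Set.Icc (-(b/K)) 0, ψ' t ∈ I) →
        nC1 (-(b/K)) 0 (ψ' - ψ) ≤ δ →
        ∀ χ : ℝ → ℝ, C1on (-(b/K)) 0 χ →
          nC1 0 (b/K) (DY g Y ψ' χ - DY g Y ψ χ) ≤ ε' * nC1 (-(b/K)) 0 χ) := by
  have key := fun ψ hψ hψI ε' (hε' : ε' > 0) =>
    solutionMap_local_estimates I J hIo hJo x₂ b K hb hK g hsub hg hg2 Y hY (ψ := ψ) hψ hψI hε'
  refine ⟨fun ψ hψ hψI ε' hε' => ?_, fun ψ hψ hψI ε' hε' => ?_⟩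
  · obtain ⟨δ, hδ, hest⟩ := key ψ hψ hψI ε' hε'
    exact ⟨δ, hδ, fun ψ' h₁ h₂ h₃ => (hest ψ' h₁ h₂ h₃).1⟩
  · obtain ⟨δ, hδ, hest⟩ := key ψ hψ hψI ε' hε'
    exact ⟨δ, hδ, fun ψ' h₁ h₂ h₃ => (hest ψ' h₁ h₂ h₃).2⟩

/-- under hypothesis (G) with h = b/K, the solution map ψ ↦ y(·,ψ) of the
integral equation y(t) + ∫₀ᵗ g(y(s),ψ(-s)) ds = x₂ is continuously Fréchet differentiable
from M = C¹([-h,0],I) into C¹([0,h],ℝ), with derivative Dy(ψ) given by the stated formula. -/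
theorem stmt19 (I J : Set ℝ) (hIo : IsOpen I) (hIne : I.Nonempty)
    (hJo : IsOpen J) (hJc : J.OrdConnected)
    (x₁ x₂ b K ε : ℝ) (hb : 0 < b) (hK : 0 < K) (hε : 0 < ε)
    (g : ℝ → ℝ → ℝ)
    (hsub : Metric.closedBall x₂ b ⊆ J)
    (hg : ContDiffOn ℝ 1 (fun p : ℝ × ℝ => g p.1 p.2) (J ×ˢ I))
    (hg2 : ∀ x ∈ Metric.closedBall x₂ b, ∀ y ∈ I, |p1 g x y| < K / b)
    (hg3 : ∀ x ∈ Metric.closedBall x₂ b, ∀ y ∈ I, ε ≤ g x y ∧ g x y ≤ K)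
    (hx : x₂ - x₁ ∈ Set.Ioo 0 ((b / K) * ε))
    (Y : (ℝ → ℝ) → ℝ → ℝ)
    (hY : ∀ ψ : ℝ → ℝ, C1on (-(b/K)) 0 ψ → (∀ t ∈ Set.Icc (-(b/K)) 0, ψ t ∈ I) →
      C1on 0 (b/K) (Y ψ) ∧ (∀ s ∈ Set.Icc (0:ℝ) (b/K), Y ψ s ∈ Metric.closedBall x₂ b) ∧
      (∀ t ∈ Set.Icc (0:ℝ) (b/K),
        Y ψ t + ∫ s in (0:ℝ)..t, g (Y ψ s) (ψ (-s)) = x₂)) :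
    (∀ ψ : ℝ → ℝ, C1on (-(b/K)) 0 ψ → (∀ t ∈ Set.Icc (-(b/K)) 0, ψ t ∈ I) →
      ∀ ε' > 0, ∃ δ > 0, ∀ ψ' : ℝ → ℝ,
        C1on (-(b/K)) 0 ψ' → (∀ t ∈ Set.Icc (-(b/K)) 0, ψ' t ∈ I) →
        nC1 (-(b/K)) 0 (ψ' - ψ) ≤ δ →
        nC1 0 (b/K) (Y ψ' - Y ψ - DY g Y ψ (ψ' - ψ)) ≤ ε' * nC1 (-(b/K)) 0 (ψ' - ψ)) ∧
    (∀ ψ : ℝ → ℝ, C1on (-(b/K)) 0 ψ → (∀ t ∈ Set.Icc (-(b/K)) 0, ψ t ∈ I) →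
      ∀ ε' > 0, ∃ δ > 0, ∀ ψ' : ℝ → ℝ,
        C1on (-(b/K)) 0 ψ' → (∀ t ∈ Set.Icc (-(b/K)) 0, ψ' t ∈ I) →
        nC1 (-(b/K)) 0 (ψ' - ψ) ≤ δ →
        ∀ χ : ℝ → ℝ, C1on (-(b/K)) 0 χ →
          nC1 0 (b/K) (DY g Y ψ' χ - DY g Y ψ χ) ≤ ε' * nC1 (-(b/K)) 0 χ) :=
  stmt19_general I J hIo hJo x₂ b K hb hK g hsub hg hg2 Y hY
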